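/- Let n ≥ 2. A permutation π of {1,...,n} avoids the four patterns 1-23, 2-31, 1-32, and 3-12 (with the adjacency conventions of generalized patterns) if and only if π is the decreasing permutation n (n−1) ... 2 1 or the permutation (n−1)(n−2)...2 1 n. In particular, there are exactly 2 such permutations of each length n ≥ 2. -/

import Mathlib

/-!
If `π` avoids the four patterns, every triple `π i, π j, π (j + 1)` with `i < j` is order-isomorphic
to 213 or 321. Hence `π` decreases on its first `n - 1` positions. If it also descends at the last
step it is strictly antitone; otherwise the 213 case with `j = n - 2` makes `π (n - 1)` larger than
every other value. Either way, composing `π` with the candidate involution gives a strictly monotone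
self-map of `Fin n`, which must be the identity.
-/

open Equiv Function

theorem Function.Involutive.eq_of_strictMono_comp {α : Type*} [LinearOrder α] [Finite α]
    {f σ : α → α} (hσ : Involutive σ) (h : StrictMono (f ∘ σ)) : f = σ :=
  funext fun x => by simpa only [comp_apply, hσ x] using h.apply_eq (x := σ x)

/-- The dashed patterns 1-23, 2-31, 1-32 and 3-12, in this order; the adjacent pair of an
occurrence sits at positions `j, j + 1`. -/
def AvoidsPatterns {n : ℕ} (π : Perm (Fin n)) : Prop :=
  (¬ (∃ (i j : Fin n) (h : (j : ℕ) + 1 < n),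
    i < j ∧ π i < π j ∧ π j < π ⟨(j : ℕ) + 1, h⟩)) ∧
  (¬ (∃ (i j : Fin n) (h : (j : ℕ) + 1 < n),
    i < j ∧ π ⟨(j : ℕ) + 1, h⟩ < π i ∧ π i < π j)) ∧
  (¬ (∃ (i j : Fin n) (h : (j : ℕ) + 1 < n),
    i < j ∧ π i < π ⟨(j : ℕ) + 1, h⟩ ∧ π ⟨(j : ℕ) + 1, h⟩ < π j)) ∧
  (¬ (∃ (i j : Fin n) (h : (j : ℕ) + 1 < n),
    i < j ∧ π j < π ⟨(j : ℕ) + 1, h⟩ ∧ π ⟨(j : ℕ) + 1, h⟩ < π i))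

def revExceptLast (n : ℕ) (i : Fin n) : Fin n :=
  ⟨if (i : ℕ) = n - 1 then n - 1 else n - 2 - i, by split_ifs <;> omega⟩

theorem val_revExceptLast {n : ℕ} (i : Fin n) :
    (revExceptLast n i : ℕ) = if (i : ℕ) = n - 1 then n - 1 else n - 2 - i := rfl

theorem revExceptLast_involutive (n : ℕ) : Involutive (revExceptLast n) := fun i => by
  ext; simp only [val_revExceptLast]; split_ifs <;> omega

def revExceptLastPerm (n : ℕ) : Perm (Fin n) := (revExceptLast_involutive n).toPerm

variable {n : ℕ} {π : Perm (Fin n)}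

theorem perm_eq_revPerm_iff : π = Fin.revPerm ↔ ∀ i : Fin n, (π i : ℕ) = n - 1 - i :=
  Equiv.ext_iff.trans <| forall_congr' fun i => by
    rw [Fin.ext_iff, Fin.revPerm_apply, Fin.val_rev]; omega

theorem perm_eq_revExceptLastPerm_iff : π = revExceptLastPerm n ↔
    ∀ i : Fin n,
      ((i : ℕ) < n - 1 → (π i : ℕ) = n - 2 - i) ∧ ((i : ℕ) = n - 1 → (π i : ℕ) = n - 1) :=
  Equiv.ext_iff.trans <| forall_congr' fun i => by
    rw [Fin.ext_iff, revExceptLastPerm, Involutive.coe_toPerm, val_revExceptLast]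
    have := i.isLt
    split_ifs <;> grind

theorem revExceptLastPerm_ne_revPerm (hn : 2 ≤ n) : revExceptLastPerm n ≠ Fin.revPerm := by
  intro h
  have := perm_eq_revPerm_iff.1 h ⟨0, by omega⟩
  rw [revExceptLastPerm, Involutive.coe_toPerm, val_revExceptLast] at this
  split_ifs at this <;> omega

theorem avoidsPatterns_of_strictAnti (hπ : StrictAnti π) : AvoidsPatterns π := by
  refine ⟨?_, ?_, ?_, ?_⟩ <;> rintro ⟨i, j, hj, hij, h₁, h₂⟩
  · exact lt_asymm h₁ (hπ hij)
  · exact lt_asymm h₂ (hπ hij)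
  · exact lt_asymm h₁ (hπ (hij.trans (Nat.lt_succ_self _)))
  · exact lt_asymm h₁ (hπ (Nat.lt_succ_self _))

theorem avoidsPatterns_revExceptLastPerm : AvoidsPatterns (revExceptLastPerm n) := by
  refine ⟨?_, ?_, ?_, ?_⟩ <;> rintro ⟨i, j, hj, hij, h₁, h₂⟩ <;>
    simp only [Fin.lt_def, revExceptLastPerm, Involutive.coe_toPerm, val_revExceptLast] at * <;>
    split_ifs at * <;> omega

namespace AvoidsPatterns

theorem apply_lt_of_lt (h : AvoidsPatterns π) {i j k : Fin n} (hij : i < j)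
    (hk : (k : ℕ) = j + 1) : π j < π i := by
  obtain ⟨k, hkn⟩ := k
  subst hk
  obtain ⟨h₁, h₂, h₃, -⟩ := h
  have hjk : j < ⟨j + 1, hkn⟩ := Nat.lt_succ_self _
  have hπik := π.injective.ne (hij.trans hjk).ne
  have hπjk := π.injective.ne hjk.ne
  by_contra! hle
  have hπij := hle.lt_of_ne (π.injective.ne hij.ne)
  rcases lt_trichotomy (π ⟨j + 1, hkn⟩) (π i) with hki | hki | hik
  · exact h₂ ⟨i, j, _, hij, hki, hπij⟩
  · exact hπik hki.symm
  · rcases hπjk.lt_or_gt with hjk' | hkj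
    · exact h₁ ⟨i, j, _, hij, hπij, hjk'⟩
    · exact h₃ ⟨i, j, _, hij, hik, hkj⟩

theorem apply_lt_of_ascent (h : AvoidsPatterns π) {i j k : Fin n} (hij : i < j)
    (hk : (k : ℕ) = j + 1) (hjk : π j < π k) : π i < π k := by
  obtain ⟨k, hkn⟩ := k
  subst hk
  refine (le_of_not_gt fun hki => h.2.2.2 ⟨i, j, _, hij, hjk, hki⟩).lt_of_ne ?_
  exact π.injective.ne (hij.trans (Nat.lt_succ_self _)).ne

theorem strictAnti (h : AvoidsPatterns π) (hn : 2 ≤ n)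
    (hdesc : π ⟨n - 1, by omega⟩ < π ⟨n - 2, by omega⟩) : StrictAnti π := by
  intro i j hij
  by_cases hj : (j : ℕ) + 1 < n
  · exact h.apply_lt_of_lt hij (k := ⟨j + 1, hj⟩) rfl
  have hj' : (j : ℕ) = n - 1 := by omega
  obtain ⟨j, hjn⟩ := j
  obtain ⟨i, hin⟩ := i
  dsimp only at hj'
  subst hj'
  rcases Nat.lt_or_ge i (n - 2) with hi | hi
  · exact hdesc.trans <|
      h.apply_lt_of_lt (k := ⟨n - 1, hjn⟩) (Fin.mk_lt_mk.2 hi) (by dsimp only; omega)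
  · obtain rfl : i = n - 2 := by rw [Fin.mk_lt_mk] at hij; omega
    exact hdesc

theorem eq_revPerm (h : AvoidsPatterns π) (hn : 2 ≤ n)
    (hdesc : π ⟨n - 1, by omega⟩ < π ⟨n - 2, by omega⟩) : π = Fin.revPerm :=
  Equiv.ext <| congrFun <| Fin.rev_involutive.eq_of_strictMono_comp <|
    StrictAnti.comp (h.strictAnti hn hdesc) Fin.rev_strictAnti

theorem eq_revExceptLastPerm (h : AvoidsPatterns π) (hn : 2 ≤ n)
    (hasc : π ⟨n - 2, by omega⟩ < π ⟨n - 1, by omega⟩) : π = revExceptLastPerm n := by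
  have hmax : ∀ i : Fin n, (i : ℕ) < n - 1 → π i < π ⟨n - 1, by omega⟩ := by
    rintro ⟨i, hin⟩ hi
    rcases Nat.lt_or_ge i (n - 2) with hi' | hi'
    · exact h.apply_lt_of_ascent (j := ⟨n - 2, by omega⟩) (Fin.mk_lt_mk.2 hi')
        (by dsimp only; omega) hasc
    · obtain rfl : i = n - 2 := by dsimp only at hi; omega
      exact hasc
  have hmono : StrictMono (π ∘ revExceptLast n) := by
    intro a b hab
    rw [Fin.lt_def] at hab
    simp only [comp_apply]
    by_cases hb : (b : ℕ) = n - 1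
    · have hb' : revExceptLast n b = ⟨n - 1, by omega⟩ :=
        Fin.ext (by simp [val_revExceptLast, hb])
      rw [hb']
      apply hmax
      rw [val_revExceptLast, if_neg (by omega)]
      omega
    · refine h.apply_lt_of_lt (k := ⟨n - 1 - a, by omega⟩) ?_ ?_ <;>
        simp only [Fin.lt_def, val_revExceptLast] <;> split_ifs <;> omega
  exact Equiv.ext (congrFun ((revExceptLast_involutive n).eq_of_strictMono_comp hmono))

end AvoidsPatterns

theorem avoidsPatterns_iff (hn : 2 ≤ n) :
    AvoidsPatterns π ↔ π = Fin.revPerm ∨ π = revExceptLastPerm n := by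
  refine ⟨fun h => ?_, ?_⟩
  · have hne : (⟨n - 1, by omega⟩ : Fin n) ≠ ⟨n - 2, by omega⟩ :=
      Fin.ne_of_val_ne (by dsimp only; omega)
    rcases (π.injective.ne hne).lt_or_gt with hdesc | hasc
    · exact .inl (h.eq_revPerm hn hdesc)
    · exact .inr (h.eq_revExceptLastPerm hn hasc)
  · rintro (rfl | rfl)
    · exact avoidsPatterns_of_strictAnti Fin.rev_strictAnti
    · exact avoidsPatterns_revExceptLastPerm

theorem stmt_12 (n : ℕ) (hn : 2 ≤ n) :
    (∀ π : Equiv.Perm (Fin n),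
      ((¬ (∃ (i j : Fin n) (h : (j : ℕ) + 1 < n), i < j ∧ π i < π j ∧ π j < π ⟨(j : ℕ) + 1, h⟩)) ∧
      (¬ (∃ (i j : Fin n) (h : (j : ℕ) + 1 < n), i < j ∧ π ⟨(j : ℕ) + 1, h⟩ < π i ∧ π i < π j)) ∧
      (¬ (∃ (i j : Fin n) (h : (j : ℕ) + 1 < n), i < j ∧ π i < π ⟨(j : ℕ) + 1, h⟩ ∧ π ⟨(j : ℕ) + 1, h⟩ < π j)) ∧
      (¬ (∃ (i j : Fin n) (h : (j : ℕ) + 1 < n), i < j ∧ π j < π ⟨(j : ℕ) + 1, h⟩ ∧ π ⟨(j : ℕ) + 1, h⟩ < π i)))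
      ↔
      ((∀ i : Fin n, (π i : ℕ) = n - 1 - (i : ℕ)) ∨
      (∀ i : Fin n, ((i : ℕ) < n - 1 → (π i : ℕ) = n - 2 - (i : ℕ)) ∧ ((i : ℕ) = n - 1 → (π i : ℕ) = n - 1)))) ∧
    Set.ncard {π : Equiv.Perm (Fin n) |
      (¬ (∃ (i j : Fin n) (h : (j : ℕ) + 1 < n), i < j ∧ π i < π j ∧ π j < π ⟨(j : ℕ) + 1, h⟩)) ∧
      (¬ (∃ (i j : Fin n) (h : (j : ℕ) + 1 < n), i < j ∧ π ⟨(j : ℕ) + 1, h⟩ < π i ∧ π i < π j)) ∧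
      (¬ (∃ (i j : Fin n) (h : (j : ℕ) + 1 < n), i < j ∧ π i < π ⟨(j : ℕ) + 1, h⟩ ∧ π ⟨(j : ℕ) + 1, h⟩ < π j)) ∧
      (¬ (∃ (i j : Fin n) (h : (j : ℕ) + 1 < n), i < j ∧ π j < π ⟨(j : ℕ) + 1, h⟩ ∧ π ⟨(j : ℕ) + 1, h⟩ < π i))} = 2 := by
  have hset : {π : Perm (Fin n) | AvoidsPatterns π} = {Fin.revPerm, revExceptLastPerm n} := by
    ext π
    exact avoidsPatterns_iff hn
  refine ⟨fun π => (avoidsPatterns_iff hn).trans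
    (or_congr perm_eq_revPerm_iff perm_eq_revExceptLastPerm_iff), ?_⟩
  exact (congrArg Set.ncard hset).trans (Set.ncard_pair (revExceptLastPerm_ne_revPerm hn).symm)
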